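/- Let G(x) = ∫₁^∞ e^{−x·t}/t dt for x > 0, and define F(x) = −3 + (8x+4)·e^{2x}·G(2x) − (x+1)·e^{x}·G(x). Then F(x) > 0 for every x ≥ 2. -/
import Mathlib


open MeasureTheory

/-- `G(x) = ∫₁^∞ e^{-x t} / t dt`. -/
noncomputable def G (x : ℝ) : ℝ := ∫ t in Set.Ioi (1 : ℝ), Real.exp (-x * t) / t

/-- `F(x) = -3 + (8x+4) e^{2x} G(2x) - (x+1) e^{x} G(x)`. -/
noncomputable def F (x : ℝ) : ℝ :=
  -3 + (8 * x + 4) * Real.exp (2 * x) * G (2 * x) - (x + 1) * Real.exp x * G x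

open Set Real in
private lemma moment_integrable (n : ℕ) :
    IntegrableOn (fun u : ℝ => Real.exp (-u) * u ^ n) (Ioi 0) := by
  have h := Real.GammaIntegral_convergent (s := (n : ℝ) + 1) (by positivity)
  refine h.congr_fun ?_ measurableSet_Ioi
  intro x _
  show Real.exp (-x) * x ^ ((n : ℝ) + 1 - 1) = Real.exp (-x) * x ^ n
  rw [show ((n : ℝ) + 1 - 1) = (n : ℝ) by ring, Real.rpow_natCast]

open Set Real in
private lemma moment (n : ℕ) :
    ∫ u in Ioi (0 : ℝ), Real.exp (-u) * u ^ n = (n.factorial : ℝ) := by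
  have h : Real.Gamma ((n : ℝ) + 1)
      = (∫ x in Ioi (0 : ℝ), Real.exp (-x) * x ^ ((n : ℝ) + 1 - 1)) :=
    Real.Gamma_eq_integral (by positivity)
  rw [show ((n : ℝ) + 1 - 1) = (n : ℝ) by ring] at h
  simp_rw [Real.rpow_natCast] at h
  rw [← h, Real.Gamma_nat_eq_factorial]

open Set Real in
private lemma poly_moment (a0 a1 a2 a3 a4 : ℝ) :
    ∫ u in Ioi (0 : ℝ), Real.exp (-u) * (a0 + a1 * u + a2 * u ^ 2 + a3 * u ^ 3 + a4 * u ^ 4)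
      = a0 + a1 + 2 * a2 + 6 * a3 + 24 * a4 := by
  have m0 : IntegrableOn (fun u : ℝ => a0 * (Real.exp (-u) * u ^ 0)) (Ioi 0) :=
    (moment_integrable 0).const_mul a0
  have m1 : IntegrableOn (fun u : ℝ => a1 * (Real.exp (-u) * u ^ 1)) (Ioi 0) :=
    (moment_integrable 1).const_mul a1
  have m2 : IntegrableOn (fun u : ℝ => a2 * (Real.exp (-u) * u ^ 2)) (Ioi 0) :=
    (moment_integrable 2).const_mul a2
  have m3 : IntegrableOn (fun u : ℝ => a3 * (Real.exp (-u) * u ^ 3)) (Ioi 0) :=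
    (moment_integrable 3).const_mul a3
  have m4 : IntegrableOn (fun u : ℝ => a4 * (Real.exp (-u) * u ^ 4)) (Ioi 0) :=
    (moment_integrable 4).const_mul a4
  have h01 : IntegrableOn (fun u : ℝ =>
      a0 * (Real.exp (-u) * u ^ 0) + a1 * (Real.exp (-u) * u ^ 1)) (Ioi 0) := m0.add m1
  have h012 : IntegrableOn (fun u : ℝ =>
      a0 * (Real.exp (-u) * u ^ 0) + a1 * (Real.exp (-u) * u ^ 1)
        + a2 * (Real.exp (-u) * u ^ 2)) (Ioi 0) := h01.add m2
  have h0123 : IntegrableOn (fun u : ℝ =>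
      a0 * (Real.exp (-u) * u ^ 0) + a1 * (Real.exp (-u) * u ^ 1)
        + a2 * (Real.exp (-u) * u ^ 2) + a3 * (Real.exp (-u) * u ^ 3)) (Ioi 0) := h012.add m3
  have step : ∫ u in Ioi (0 : ℝ),
        Real.exp (-u) * (a0 + a1 * u + a2 * u ^ 2 + a3 * u ^ 3 + a4 * u ^ 4)
      = ∫ u in Ioi (0 : ℝ), (a0 * (Real.exp (-u) * u ^ 0) + a1 * (Real.exp (-u) * u ^ 1)
        + a2 * (Real.exp (-u) * u ^ 2) + a3 * (Real.exp (-u) * u ^ 3)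
        + a4 * (Real.exp (-u) * u ^ 4)) :=
    setIntegral_congr_fun measurableSet_Ioi fun u _ => by ring
  rw [step, integral_add h0123 m4, integral_add h012 m3, integral_add h01 m2,
    integral_add m0 m1]
  simp_rw [integral_const_mul, moment]
  norm_num [Nat.factorial]
  ring

open Set Real in
private lemma poly_integrable (a0 a1 a2 a3 a4 : ℝ) :
    IntegrableOn (fun u : ℝ =>
      Real.exp (-u) * (a0 + a1 * u + a2 * u ^ 2 + a3 * u ^ 3 + a4 * u ^ 4)) (Ioi 0) := by
  have big : IntegrableOn (fun u : ℝ =>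
      a0 * (Real.exp (-u) * u ^ 0) + a1 * (Real.exp (-u) * u ^ 1)
        + a2 * (Real.exp (-u) * u ^ 2) + a3 * (Real.exp (-u) * u ^ 3)
        + a4 * (Real.exp (-u) * u ^ 4)) (Ioi 0) :=
    (((((moment_integrable 0).const_mul a0).add
      ((moment_integrable 1).const_mul a1)).add
      ((moment_integrable 2).const_mul a2)).add
      ((moment_integrable 3).const_mul a3)).add
      ((moment_integrable 4).const_mul a4)
  refine big.congr_fun (fun u _ => by ring) measurableSet_Ioi

open Set Real in
private lemma I_integrable {x : ℝ} (hx : 0 < x) :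
    IntegrableOn (fun u : ℝ => Real.exp (-u) / (x + u)) (Ioi 0) := by
  apply Integrable.mono ((moment_integrable 0).const_mul x⁻¹)
  · have hc : ContinuousOn (fun u : ℝ => Real.exp (-u) / (x + u)) (Ioi 0) := by
      apply ContinuousOn.div
      · exact (Real.continuous_exp.comp continuous_neg).continuousOn
      · exact (continuous_const.add continuous_id).continuousOn
      · intro u hu
        exact (add_pos hx (mem_Ioi.mp hu)).ne'
    exact hc.aestronglyMeasurable measurableSet_Ioi
  · filter_upwards [ae_restrict_mem measurableSet_Ioi] with u hu
    have hu0 : 0 < u := mem_Ioi.mp hu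
    have hxu : 0 < x + u := add_pos hx hu0
    rw [Real.norm_eq_abs, Real.norm_eq_abs, abs_of_nonneg (by positivity),
      abs_of_nonneg (by positivity)]
    rw [pow_zero, mul_one, div_eq_mul_inv, mul_comm x⁻¹ _]
    apply mul_le_mul_of_nonneg_left _ (Real.exp_pos _).le
    exact inv_anti₀ hx (by linarith)

open Set Real in
private lemma I_lower {x : ℝ} (hx : 0 < x) :
    (x + 3) / (x ^ 2 + 4 * x + 2) ≤ ∫ u in Ioi (0 : ℝ), Real.exp (-u) / (x + u) := by
  have hd : (0 : ℝ) < x ^ 2 + 4 * x + 2 := by positivity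
  have hr : (0 : ℝ) < (x ^ 2 + 4 * x + 2) ^ 2 := by positivity
  have hP : (∫ u in Ioi (0 : ℝ), Real.exp (-u) *
        ((16 + 20 * x + 8 * x ^ 2 + x ^ 3) / (x ^ 2 + 4 * x + 2) ^ 2
          + (-(20 + 8 * x + x ^ 2) / (x ^ 2 + 4 * x + 2) ^ 2) * u
          + ((8 + x) / (x ^ 2 + 4 * x + 2) ^ 2) * u ^ 2
          + ((-1) / (x ^ 2 + 4 * x + 2) ^ 2) * u ^ 3 + 0 * u ^ 4))
      = (x + 3) / (x ^ 2 + 4 * x + 2) := by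
    rw [poly_moment]
    field_simp
    ring
  have hmono : (∫ u in Ioi (0 : ℝ), Real.exp (-u) *
        ((16 + 20 * x + 8 * x ^ 2 + x ^ 3) / (x ^ 2 + 4 * x + 2) ^ 2
          + (-(20 + 8 * x + x ^ 2) / (x ^ 2 + 4 * x + 2) ^ 2) * u
          + ((8 + x) / (x ^ 2 + 4 * x + 2) ^ 2) * u ^ 2
          + ((-1) / (x ^ 2 + 4 * x + 2) ^ 2) * u ^ 3 + 0 * u ^ 4))
      ≤ ∫ u in Ioi (0 : ℝ), Real.exp (-u) / (x + u) := by
    refine setIntegral_mono_on (poly_integrable _ _ _ _ _) (I_integrable hx)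
      measurableSet_Ioi ?_
    intro u hu
    have hu0 : 0 < u := mem_Ioi.mp hu
    have hxu : 0 < x + u := add_pos hx hu0
    have hid : Real.exp (-u) / (x + u) - Real.exp (-u) *
        ((16 + 20 * x + 8 * x ^ 2 + x ^ 3) / (x ^ 2 + 4 * x + 2) ^ 2
          + (-(20 + 8 * x + x ^ 2) / (x ^ 2 + 4 * x + 2) ^ 2) * u
          + ((8 + x) / (x ^ 2 + 4 * x + 2) ^ 2) * u ^ 2
          + ((-1) / (x ^ 2 + 4 * x + 2) ^ 2) * u ^ 3 + 0 * u ^ 4)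
        = Real.exp (-u) * (u ^ 2 - 4 * u + 2) ^ 2
          / ((x + u) * (x ^ 2 + 4 * x + 2) ^ 2) := by
      field_simp
      ring
    nlinarith [hid, div_nonneg (mul_nonneg (Real.exp_pos (-u)).le
      (sq_nonneg (u ^ 2 - 4 * u + 2))) (mul_nonneg hxu.le hr.le)]
  linarith [hP ▸ hmono]

open Set Real in
private lemma I_upper {x : ℝ} (hx : 0 < x) :
    (∫ u in Ioi (0 : ℝ), Real.exp (-u) / (x + u))
      ≤ (x ^ 2 + 5 * x + 2) / (x * (x ^ 2 + 6 * x + 6)) := by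
  have hd : (0 : ℝ) < x * (x ^ 2 + 6 * x + 6) := by positivity
  have hr : (0 : ℝ) < x * (x ^ 2 + 6 * x + 6) ^ 2 := by positivity
  have hP : (∫ u in Ioi (0 : ℝ), Real.exp (-u) *
        ((36 + 72 * x + 48 * x ^ 2 + 12 * x ^ 3 + x ^ 4) / (x * (x ^ 2 + 6 * x + 6) ^ 2)
          + (-(72 + 48 * x + 12 * x ^ 2 + x ^ 3) / (x * (x ^ 2 + 6 * x + 6) ^ 2)) * u
          + ((48 + 12 * x + x ^ 2) / (x * (x ^ 2 + 6 * x + 6) ^ 2)) * u ^ 2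
          + (-(12 + x) / (x * (x ^ 2 + 6 * x + 6) ^ 2)) * u ^ 3
          + (1 / (x * (x ^ 2 + 6 * x + 6) ^ 2)) * u ^ 4))
      = (x ^ 2 + 5 * x + 2) / (x * (x ^ 2 + 6 * x + 6)) := by
    rw [poly_moment]
    have h66 : (x ^ 2 + 6 * x + 6) ≠ 0 := by positivity
    field_simp
    ring
  have hmono : (∫ u in Ioi (0 : ℝ), Real.exp (-u) / (x + u))
      ≤ ∫ u in Ioi (0 : ℝ), Real.exp (-u) *
        ((36 + 72 * x + 48 * x ^ 2 + 12 * x ^ 3 + x ^ 4) / (x * (x ^ 2 + 6 * x + 6) ^ 2)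
          + (-(72 + 48 * x + 12 * x ^ 2 + x ^ 3) / (x * (x ^ 2 + 6 * x + 6) ^ 2)) * u
          + ((48 + 12 * x + x ^ 2) / (x * (x ^ 2 + 6 * x + 6) ^ 2)) * u ^ 2
          + (-(12 + x) / (x * (x ^ 2 + 6 * x + 6) ^ 2)) * u ^ 3
          + (1 / (x * (x ^ 2 + 6 * x + 6) ^ 2)) * u ^ 4) := by
    refine setIntegral_mono_on (I_integrable hx) (poly_integrable _ _ _ _ _)
      measurableSet_Ioi ?_
    intro u hu
    have hu0 : 0 < u := mem_Ioi.mp hu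
    have hxu : 0 < x + u := add_pos hx hu0
    have hid : Real.exp (-u) *
        ((36 + 72 * x + 48 * x ^ 2 + 12 * x ^ 3 + x ^ 4) / (x * (x ^ 2 + 6 * x + 6) ^ 2)
          + (-(72 + 48 * x + 12 * x ^ 2 + x ^ 3) / (x * (x ^ 2 + 6 * x + 6) ^ 2)) * u
          + ((48 + 12 * x + x ^ 2) / (x * (x ^ 2 + 6 * x + 6) ^ 2)) * u ^ 2
          + (-(12 + x) / (x * (x ^ 2 + 6 * x + 6) ^ 2)) * u ^ 3
          + (1 / (x * (x ^ 2 + 6 * x + 6) ^ 2)) * u ^ 4)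
        - Real.exp (-u) / (x + u)
        = Real.exp (-u) * (u * (u ^ 2 - 6 * u + 6) ^ 2)
          / ((x + u) * (x * (x ^ 2 + 6 * x + 6) ^ 2)) := by
      field_simp
      ring
    nlinarith [hid, div_nonneg (mul_nonneg (Real.exp_pos (-u)).le
      (mul_nonneg hu0.le (sq_nonneg (u ^ 2 - 6 * u + 6)))) (mul_nonneg hxu.le hr.le)]
  linarith [hP ▸ hmono]

open Set Real in
private lemma G_repr {x : ℝ} (hx : 0 < x) :
    Real.exp x * G x = ∫ u in Ioi (0 : ℝ), Real.exp (-u) / (x + u) := by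
  have step1 : (∫ t in Ioi (1 : ℝ), Real.exp (-x * t) / t)
      = ∫ s in Ioi (0 : ℝ), Real.exp (-x * (s + 1)) / (s + 1) := by
    have hpre : Ioi (0 : ℝ) = (fun s : ℝ => s + 1) ⁻¹' (Ioi 1) := by
      ext s
      simp only [Set.mem_preimage, Set.mem_Ioi]
      constructor <;> intro h <;> linarith
    rw [hpre]
    exact ((measurePreserving_add_right volume (1 : ℝ)).setIntegral_preimage_emb
      (MeasurableEquiv.addRight (1 : ℝ)).measurableEmbedding
      (fun t => Real.exp (-x * t) / t) (Ioi 1)).symm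
  have step2 : (∫ s in Ioi (0 : ℝ), Real.exp (-x * (s + 1)) / (s + 1))
      = x⁻¹ • ∫ u in Ioi (x * 0),
        Real.exp (-x) * (x * (Real.exp (-u) / (x + u))) := by
    rw [← integral_comp_mul_left_Ioi
      (fun u => Real.exp (-x) * (x * (Real.exp (-u) / (x + u)))) 0 hx]
    refine setIntegral_congr_fun measurableSet_Ioi ?_
    intro s hs
    have hs0 : 0 < s := mem_Ioi.mp hs
    have h1 : (0 : ℝ) < s + 1 := by linarith
    have h2 : (0 : ℝ) < x + x * s := by positivity
    show Real.exp (-x * (s + 1)) / (s + 1)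
      = Real.exp (-x) * (x * (Real.exp (-(x * s)) / (x + x * s)))
    rw [show -x * (s + 1) = -x + -(x * s) by ring, Real.exp_add]
    field_simp
    ring
  unfold G
  rw [step1, step2, mul_zero, smul_eq_mul, integral_const_mul, integral_const_mul]
  rw [Real.exp_neg]
  field_simp

theorem stmt7 (x : ℝ) (hx : 2 ≤ x) : 0 < F x := by
  have hx0 : (0 : ℝ) < x := by linarith
  have hx2 : (0 : ℝ) < 2 * x := by linarith
  have e1 := G_repr hx0
  have e2 := G_repr hx2
  set I1 : ℝ := ∫ u in Set.Ioi (0 : ℝ), Real.exp (-u) / (x + u) with hI1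
  set I2 : ℝ := ∫ u in Set.Ioi (0 : ℝ), Real.exp (-u) / (2 * x + u) with hI2
  have h1 : I1 ≤ (x ^ 2 + 5 * x + 2) / (x * (x ^ 2 + 6 * x + 6)) := I_upper hx0
  have h2 : (2 * x + 3) / ((2 * x) ^ 2 + 4 * (2 * x) + 2) ≤ I2 := I_lower hx2
  have hF : F x = -3 + (8 * x + 4) * I2 - (x + 1) * I1 := by
    unfold F
    rw [show (8 * x + 4) * Real.exp (2 * x) * G (2 * x)
        = (8 * x + 4) * (Real.exp (2 * x) * G (2 * x)) by ring, e2,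
      show (x + 1) * Real.exp x * G x = (x + 1) * (Real.exp x * G x) by ring, e1]
  have hd1 : (0 : ℝ) < (2 * x) ^ 2 + 4 * (2 * x) + 2 := by positivity
  have hd2 : (0 : ℝ) < x * (x ^ 2 + 6 * x + 6) := by positivity
  have key : (0 : ℝ) < -3 + (8 * x + 4) * ((2 * x + 3) / ((2 * x) ^ 2 + 4 * (2 * x) + 2))
      - (x + 1) * ((x ^ 2 + 5 * x + 2) / (x * (x ^ 2 + 6 * x + 6))) := by
    have heq : -3 + (8 * x + 4) * ((2 * x + 3) / ((2 * x) ^ 2 + 4 * (2 * x) + 2))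
        - (x + 1) * ((x ^ 2 + 5 * x + 2) / (x * (x ^ 2 + 6 * x + 6)))
        = (8 * x ^ 2 + 6 * x - 4)
          / (((2 * x) ^ 2 + 4 * (2 * x) + 2) * (x * (x ^ 2 + 6 * x + 6))) := by
      field_simp
      ring
    rw [heq]
    exact div_pos (by nlinarith) (mul_pos hd1 hd2)
  have m1 : (8 * x + 4) * ((2 * x + 3) / ((2 * x) ^ 2 + 4 * (2 * x) + 2))
      ≤ (8 * x + 4) * I2 := mul_le_mul_of_nonneg_left h2 (by linarith)
  have m2 : (x + 1) * I1 ≤ (x + 1) * ((x ^ 2 + 5 * x + 2) / (x * (x ^ 2 + 6 * x + 6))) :=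
    mul_le_mul_of_nonneg_left h1 (by linarith)
  rw [hF]
  linarith
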